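/- arXiv:1909.07059 — 7 statements merged into one kernel-verified Lean document; each statement's English description precedes it below -/
import Mathlib

section
/- Let q be a positive integer, π a q-dimensional probability vector, and γ a q-dimensional vector with entries in [0,1]. Then the L² operator norm of the matrix M = (diag(π) − π πᵀ) diag(γ) satisfies ‖M‖₂ ≤ (1/2) max_{j∈[q]} π_j (1 + γ_j²). -/
/-!
Writing `w = γ ⊙ v`, the bilinear form `u ⬝ᵥ M v` is the covariance `Cov_π(u, w)` under the
distribution `π`. Polarization gives `4 Cov(u, w) = Var(u + w) - Var(u - w) ≤ E[(u + w)²]`, and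
pointwise Cauchy–Schwarz `(a + γ b)² ≤ (1 + γ²)(a² + b²)` bounds this by
`max_j π_j (1 + γ_j²) (‖u‖² + ‖v‖²)`, which is `2 max_j π_j (1 + γ_j²)` on unit
vectors.
-/

open Finset Matrix

theorem sum_mul_mul_sub_sum_mul_mul_sum_le {ι : Type*} [Fintype ι] {π : ι → ℝ}
    (hπ0 : ∀ i, 0 ≤ π i) (hπ1 : ∑ i, π i = 1) (u w : ι → ℝ) :
    ∑ i, π i * (u i * w i) - (∑ i, π i * u i) * ∑ i, π i * w i
      ≤ (∑ i, π i * (u i + w i) ^ 2) / 4 := by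
  have jensen : (∑ i, π i * (u i - w i)) ^ 2 ≤ ∑ i, π i * (u i - w i) ^ 2 :=
    (even_two.convexOn_pow (𝕜 := ℝ)).map_sum_le (fun i _ => hπ0 i) hπ1 (by simp)
  have hdiff : ∑ i, π i * (u i - w i) = ∑ i, π i * u i - ∑ i, π i * w i := by
    simp only [mul_sub, sum_sub_distrib]
  have hsq_sub : ∑ i, π i * (u i - w i) ^ 2
      = ∑ i, π i * u i ^ 2 - 2 * ∑ i, π i * (u i * w i) + ∑ i, π i * w i ^ 2 := by
    rw [mul_sum, ← sum_sub_distrib, ← sum_add_distrib]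
    exact sum_congr rfl fun i _ => by ring
  have hsq_add : ∑ i, π i * (u i + w i) ^ 2
      = ∑ i, π i * u i ^ 2 + 2 * ∑ i, π i * (u i * w i) + ∑ i, π i * w i ^ 2 := by
    rw [mul_sum, ← sum_add_distrib, ← sum_add_distrib]
    exact sum_congr rfl fun i _ => by ring
  rw [hdiff, hsq_sub] at jensen
  rw [hsq_add]
  nlinarith [sq_nonneg (∑ i, π i * u i + ∑ i, π i * w i)]

theorem dotProduct_mulVec_diagonal_sub_of_mul_diagonal {ι R : Type*} [Fintype ι] [DecidableEq ι]
    [CommRing R] (π γ u v : ι → R) :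
    u ⬝ᵥ ((diagonal π - of (fun i j => π i * π j)) * diagonal γ) *ᵥ v
      = ∑ i, π i * (u i * (γ i * v i)) - (∑ i, π i * u i) * ∑ i, π i * (γ i * v i) := by
  have hcov (w : ι → R) : (diagonal π - of (fun i j => π i * π j)) *ᵥ w
      = fun i => π i * w i - π i * ∑ j, π j * w j := by
    ext i
    rw [sub_mulVec, Pi.sub_apply, mulVec_diagonal]
    simp only [mulVec, dotProduct, of_apply, mul_sum, mul_assoc]
  rw [← mulVec_mulVec, hcov]
  simp only [dotProduct, mulVec_diagonal, mul_sub, sum_sub_distrib, sum_mul]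
  congr 1
  · exact sum_congr rfl fun i _ => by ring
  · exact sum_congr rfl fun i _ => by ring

theorem sum_mul_add_mul_sq_le {ι : Type*} [Fintype ι] {π γ : ι → ℝ}
    (hπ0 : ∀ i, 0 ≤ π i) {K : ℝ} (hK : ∀ i, π i * (1 + γ i ^ 2) ≤ K) (u v : ι → ℝ) :
    ∑ i, π i * (u i + γ i * v i) ^ 2 ≤ K * (∑ i, u i ^ 2 + ∑ i, v i ^ 2) := by
  rw [← sum_add_distrib, mul_sum]
  refine sum_le_sum fun i _ => ?_
  have cauchy_schwarz : (u i + γ i * v i) ^ 2 ≤ (1 + γ i ^ 2) * (u i ^ 2 + v i ^ 2) := by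
    nlinarith [sq_nonneg (γ i * u i - v i)]
  calc π i * (u i + γ i * v i) ^ 2
      ≤ π i * (1 + γ i ^ 2) * (u i ^ 2 + v i ^ 2) := by
        rw [mul_assoc]; exact mul_le_mul_of_nonneg_left cauchy_schwarz (hπ0 i)
    _ ≤ K * (u i ^ 2 + v i ^ 2) := by gcongr; exact hK i

theorem stmt0_general (q : ℕ) (hq : 0 < q) (π γ : Fin q → ℝ)
    (hπ0 : ∀ j, 0 ≤ π j) (hπ1 : ∑ j, π j = 1) :
    ‖Matrix.toEuclideanCLM (𝕜 := ℝ)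
        ((Matrix.diagonal π - Matrix.of (fun i j => π i * π j)) * Matrix.diagonal γ)‖
      ≤ (1 / 2) * Finset.univ.sup' ⟨⟨0, hq⟩, Finset.mem_univ _⟩
          (fun j => π j * (1 + (γ j) ^ 2)) := by
  set K := univ.sup' ⟨⟨0, hq⟩, mem_univ _⟩ (fun j => π j * (1 + (γ j) ^ 2))
  have hK (j : Fin q) : π j * (1 + γ j ^ 2) ≤ K :=
    le_sup' (fun j => π j * (1 + γ j ^ 2)) (mem_univ j)
  have hK0 : 0 ≤ K := (mul_nonneg (hπ0 ⟨0, hq⟩) (by positivity)).trans (hK ⟨0, hq⟩)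
  refine ContinuousLinearMap.opNorm_le_of_re_inner_le (by positivity) fun x y hx hy => ?_
  rw [RCLike.re_to_real, real_inner_comm, inner_toEuclideanCLM,
    dotProduct_mulVec_diagonal_sub_of_mul_diagonal]
  calc _ ≤ (∑ i, π i * (y i + γ i * x i) ^ 2) / 4 :=
        sum_mul_mul_sub_sum_mul_mul_sum_le hπ0 hπ1 _ _
    _ ≤ K * (‖y‖ ^ 2 + ‖x‖ ^ 2) / 4 := by
        rw [EuclideanSpace.real_norm_sq_eq, EuclideanSpace.real_norm_sq_eq]
        gcongr
        exact sum_mul_add_mul_sq_le hπ0 hK _ _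
    _ = 1 / 2 * K := by rw [hx, hy]; ring

/-- Let `q` be a positive integer, `π` a `q`-dimensional probability vector,
and `γ` a `q`-dimensional vector with entries in `[0,1]`. Then the L² operator norm of the
matrix `M = (diag π - π πᵀ) * diag γ` satisfies
`‖M‖₂ ≤ (1/2) * max_j π_j (1 + γ_j²)`. -/
theorem stmt0 (q : ℕ) (hq : 0 < q) (π γ : Fin q → ℝ)
    (hπ0 : ∀ j, 0 ≤ π j) (hπ1 : ∑ j, π j = 1)
    (hγ : ∀ j, γ j ∈ Set.Icc (0 : ℝ) 1) :
    ‖Matrix.toEuclideanCLM (𝕜 := ℝ)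
        ((Matrix.diagonal π - Matrix.of (fun i j => π i * π j)) * Matrix.diagonal γ)‖
      ≤ (1 / 2) * Finset.univ.sup' ⟨⟨0, hq⟩, Finset.mem_univ _⟩
          (fun j => π j * (1 + (γ j) ^ 2)) :=
  stmt0_general q hq π γ hπ0 hπ1
end

section
/- Let q be a positive integer, π a q-dimensional probability vector, and γ ∈ [0,1)^q. Set C = (1/2) max_j π_j(1+γ_j²) and assume C > 0. Then (∑_j π_j²γ_j²/(C² − π_j²γ_j²)) · (∑_j π_j²/(C² − π_j²γ_j²)) ≤ (∑_j C π_j/(C² − π_j²γ_j²))². -/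
/-- For a probability vector `π`, `γ ∈ [0,1)^q`, and
`C = (1/2) max_j π_j (1 + γ_j²)` with `C > 0`, we have
`(∑_j π_j²γ_j²/(C²−π_j²γ_j²)) (∑_j π_j²/(C²−π_j²γ_j²)) ≤ (∑_j Cπ_j/(C²−π_j²γ_j²))²`. -/
theorem stmt1 (q : ℕ) (hq : 0 < q) (π γ : Fin q → ℝ)
    (hπ0 : ∀ j, 0 ≤ π j) (hπ1 : ∑ j, π j = 1)
    (hγ : ∀ j, γ j ∈ Set.Ico (0 : ℝ) 1)
    (C : ℝ)
    (hC : C = (1 / 2) * Finset.univ.sup' ⟨⟨0, hq⟩, Finset.mem_univ _⟩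
        (fun j => π j * (1 + (γ j) ^ 2)))
    (hCpos : 0 < C) :
    (∑ j, (π j) ^ 2 * (γ j) ^ 2 / (C ^ 2 - (π j) ^ 2 * (γ j) ^ 2)) *
      (∑ j, (π j) ^ 2 / (C ^ 2 - (π j) ^ 2 * (γ j) ^ 2)) ≤
    (∑ j, C * π j / (C ^ 2 - (π j) ^ 2 * (γ j) ^ 2)) ^ 2 := by
  have hCle : ∀ j, π j * (1 + γ j ^ 2) ≤ 2 * C := by
    intro j
    have := Finset.le_sup' (fun j => π j * (1 + (γ j) ^ 2)) (Finset.mem_univ j)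
    rw [hC]; linarith
  have hD : ∀ j, 0 < C ^ 2 - (π j) ^ 2 * (γ j) ^ 2 := by
    intro j
    have h1 : 0 ≤ π j := hπ0 j
    have h2 : 0 ≤ γ j := (hγ j).1
    have h3 : γ j < 1 := (hγ j).2
    have h5 := hCle j
    have hlt : π j * γ j < C := by
      rcases h1.eq_or_lt with h | h
      · rw [← h]; simpa using hCpos
      · nlinarith [mul_pos h (pow_pos (sub_pos.2 h3) 2)]
    nlinarith [mul_nonneg h1 h2]
  set A : Fin q → ℝ := fun j => π j ^ 2 * γ j ^ 2 / (C ^ 2 - (π j) ^ 2 * (γ j) ^ 2) with hA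
  set B : Fin q → ℝ := fun j => π j ^ 2 / (C ^ 2 - (π j) ^ 2 * (γ j) ^ 2) with hB
  set E : Fin q → ℝ := fun j => C * π j / (C ^ 2 - (π j) ^ 2 * (γ j) ^ 2) with hE
  have key : ∀ j k : Fin q, A j * B k + A k * B j ≤ 2 * (E j * E k) := by
    intro j k
    have hDj := hD j; have hDk := hD k
    have h1j := hπ0 j; have h1k := hπ0 k
    have h2j := (hγ j).1; have h2k := (hγ k).1
    have h3j := (hγ j).2; have h3k := (hγ k).2
    have h5j := hCle j; have h5k := hCle k
    have num : π j ^ 2 * γ j ^ 2 * π k ^ 2 + π k ^ 2 * γ k ^ 2 * π j ^ 2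
        ≤ 2 * (C * π j * (C * π k)) := by
      nlinarith [mul_nonneg h1j h1k, sq_nonneg (γ j - γ k), sq_nonneg (γ j * γ k),
        mul_le_mul h5j h5k (by positivity) (by linarith),
        mul_nonneg (mul_nonneg h1j h1k)
          (mul_nonneg (sub_nonneg.2 (by nlinarith : γ j ^ 2 ≤ 1))
            (sub_nonneg.2 (by nlinarith : γ k ^ 2 ≤ 1)))]
    have e1 : A j * B k + A k * B j =
        (π j ^ 2 * γ j ^ 2 * π k ^ 2 + π k ^ 2 * γ k ^ 2 * π j ^ 2) /
          ((C ^ 2 - (π j) ^ 2 * (γ j) ^ 2) * (C ^ 2 - (π k) ^ 2 * (γ k) ^ 2)) := by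
      simp only [hA, hB]; field_simp
    have e2 : 2 * (E j * E k) =
        (2 * (C * π j * (C * π k))) /
          ((C ^ 2 - (π j) ^ 2 * (γ j) ^ 2) * (C ^ 2 - (π k) ^ 2 * (γ k) ^ 2)) := by
      simp only [hE]; field_simp
    rw [e1, e2]
    gcongr
  have expand1 : (∑ j, A j) * (∑ j, B j) = ∑ j, ∑ k, A j * B k :=
    Finset.sum_mul_sum _ _ _ _
  have expand2 : (∑ j, E j) ^ 2 = ∑ j, ∑ k, E j * E k := by
    rw [sq]; exact Finset.sum_mul_sum _ _ _ _
  have swap : (∑ j : Fin q, ∑ k : Fin q, A j * B k) = ∑ j : Fin q, ∑ k : Fin q, A k * B j :=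
    Finset.sum_comm
  have h2 : 2 * ((∑ j, A j) * (∑ j, B j)) ≤ 2 * ((∑ j, E j) ^ 2) := by
    rw [expand1, expand2]
    calc 2 * (∑ j, ∑ k, A j * B k) = ∑ j, ∑ k, (A j * B k + A k * B j) := by
          rw [two_mul]; nth_rewrite 2 [swap]
          rw [← Finset.sum_add_distrib]
          exact Finset.sum_congr rfl fun j _ => (Finset.sum_add_distrib).symm
      _ ≤ ∑ j, ∑ k, 2 * (E j * E k) := by
          refine Finset.sum_le_sum fun j _ => Finset.sum_le_sum fun k _ => key j k
      _ = 2 * ∑ j, ∑ k, E j * E k := by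
          rw [Finset.mul_sum]
          exact Finset.sum_congr rfl fun j _ => (Finset.mul_sum _ _ _).symm
  linarith
end

section
/- Let q be a positive integer, A_1,…,A_q ≥ 1 real numbers, π a q-dimensional probability vector with ∑_j A_j π_j² > 0, and y_1,…,y_q reals with ∑_j π_j y_j = 0. If ∑_j (A_j − 1) · ∑_j A_j π_j² ≤ (∑_j A_j π_j)², then (∑_j y_j)² ≤ q ∑_j y_j²/A_j. -/
/-- If `A_j ≥ 1`, `π` is a probability vector with `∑_j A_j π_j² > 0`,
`∑_j π_j y_j = 0`, and `∑_j (A_j − 1) · ∑_j A_j π_j² ≤ (∑_j A_j π_j)²`, then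
`(∑_j y_j)² ≤ q ∑_j y_j²/A_j`. -/
theorem stmt3 (q : ℕ) (hq : 0 < q) (A π y : Fin q → ℝ)
    (hA : ∀ j, 1 ≤ A j)
    (hπ0 : ∀ j, 0 ≤ π j) (hπ1 : ∑ j, π j = 1)
    (hpos : 0 < ∑ j, A j * (π j) ^ 2)
    (hy : ∑ j, π j * y j = 0)
    (hineq : (∑ j, (A j - 1)) * (∑ j, A j * (π j) ^ 2) ≤ (∑ j, A j * π j) ^ 2) :
    (∑ j, y j) ^ 2 ≤ (q : ℝ) * ∑ j, (y j) ^ 2 / A j := by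
  have hApos : ∀ j, 0 < A j := fun j => lt_of_lt_of_le one_pos (hA j)
  set S := ∑ j, A j * (π j) ^ 2 with hS
  set T := ∑ j, A j * π j with hT
  set t : ℝ := -T / S with ht
  -- Cauchy-Schwarz
  have key : (∑ j, y j) ^ 2 ≤ (∑ j, (y j) ^ 2 / A j) * (∑ j, A j * (1 + t * π j) ^ 2) := by
    have h1 : (∑ j, y j) = ∑ j, (y j / Real.sqrt (A j)) * (Real.sqrt (A j) * (1 + t * π j)) := by
      have : ∀ j : Fin q, (y j / Real.sqrt (A j)) * (Real.sqrt (A j) * (1 + t * π j))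
          = y j + t * (π j * y j) := by
        intro j
        have hs : Real.sqrt (A j) ≠ 0 := ne_of_gt (Real.sqrt_pos.mpr (hApos j))
        field_simp
      rw [Finset.sum_congr rfl fun j _ => this j, Finset.sum_add_distrib, ← Finset.mul_sum, hy]
      ring
    rw [h1]
    calc (∑ j, (y j / Real.sqrt (A j)) * (Real.sqrt (A j) * (1 + t * π j))) ^ 2
        ≤ (∑ j, (y j / Real.sqrt (A j)) ^ 2) * (∑ j, (Real.sqrt (A j) * (1 + t * π j)) ^ 2) :=
          Finset.sum_mul_sq_le_sq_mul_sq _ _ _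
      _ = (∑ j, (y j) ^ 2 / A j) * (∑ j, A j * (1 + t * π j) ^ 2) := by
          congr 1
          · refine Finset.sum_congr rfl fun j _ => ?_
            rw [div_pow, Real.sq_sqrt (hApos j).le]
          · refine Finset.sum_congr rfl fun j _ => ?_
            rw [mul_pow, Real.sq_sqrt (hApos j).le]
  have hq2 : (∑ j, A j * (1 + t * π j) ^ 2) ≤ (q : ℝ) := by
    have hexp : (∑ j, A j * (1 + t * π j) ^ 2) = (∑ j, A j) + 2 * t * T + t ^ 2 * S := by
      rw [hT, hS, Finset.mul_sum, Finset.mul_sum, ← Finset.sum_add_distrib,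
        ← Finset.sum_add_distrib]
      exact Finset.sum_congr rfl fun j _ => by ring
    rw [hexp, ht]
    have hS0 : S ≠ 0 := ne_of_gt hpos
    have h2 : (∑ j, A j) + 2 * (-T / S) * T + (-T / S) ^ 2 * S = (∑ j, A j) - T ^ 2 / S := by
      field_simp; ring
    rw [h2]
    have hsum : (∑ j, (A j - 1)) = (∑ j, A j) - q := by
      rw [Finset.sum_sub_distrib]; simp
    rw [hsum] at hineq
    have h3 : (∑ j, A j) - q ≤ T ^ 2 / S := (le_div_iff₀ hpos).mpr hineq
    linarith
  have hnn : 0 ≤ ∑ j, (y j) ^ 2 / A j := by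
    apply Finset.sum_nonneg; intro j _; exact div_nonneg (sq_nonneg _) (hApos j).le
  calc (∑ j, y j) ^ 2 ≤ (∑ j, (y j) ^ 2 / A j) * (∑ j, A j * (1 + t * π j) ^ 2) := key
    _ ≤ (∑ j, (y j) ^ 2 / A j) * (q : ℝ) := by exact mul_le_mul_of_nonneg_left hq2 hnn
    _ = (q : ℝ) * ∑ j, (y j) ^ 2 / A j := mul_comm _ _
end

section
/- Let q, d, D be positive integers with q ≥ d+1 and D ≤ d. Let z = (z_1,…,z_q) be a probability vector with 0 ≤ z_j ≤ 1/(q−d) for all j. Then ∑_{j=1}^q (1 − z_j)^D ≤ d + (q−d)(1 − 1/(q−d))^D. -/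
/-!
Write `c = q − d`. On `[1 − 1/c, 1]` the convex map `t ↦ t ^ D` lies below its chord, and
`1 − z_j = (1 − c z_j) · 1 + c z_j · (1 − 1/c)` with weights in `[0, 1]` because `z_j ≤ 1/c`.
Summing the chord bounds and using `∑ z_j = 1` gives `(q − c) + c (1 − 1/c) ^ D`, the value at
the extreme point with `d` zero entries and `c` entries equal to `1/c`.
-/

open Finset Set

lemma ConvexOn.apply_one_sub_le_chord {s : Set ℝ} {f : ℝ → ℝ} (hf : ConvexOn ℝ s f)
    {c x : ℝ} (hc : 0 < c) (hs₁ : 1 ∈ s) (hs₂ : 1 - 1 / c ∈ s) (hx₀ : 0 ≤ x) (hx : x ≤ 1 / c) :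
    f (1 - x) ≤ (1 - c * x) * f 1 + c * x * f (1 - 1 / c) := by
  have hcx : c * x ≤ 1 := by rwa [le_div_iff₀' hc] at hx
  have hpoint : (1 - c * x) * 1 + c * x * (1 - 1 / c) = 1 - x := by
    field_simp
    ring
  simpa only [smul_eq_mul, hpoint] using
    hf.2 hs₁ hs₂ (sub_nonneg.2 hcx) (mul_nonneg hc.le hx₀) (sub_add_cancel 1 (c * x))

lemma ConvexOn.sum_apply_one_sub_le {ι : Type*} [Fintype ι] {s : Set ℝ} {f : ℝ → ℝ}
    (hf : ConvexOn ℝ s f) {c : ℝ} (hc : 0 < c) (hs₁ : 1 ∈ s) (hs₂ : 1 - 1 / c ∈ s)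
    {z : ι → ℝ} (hz₀ : ∀ j, 0 ≤ z j) (hz : ∀ j, z j ≤ 1 / c) (hz₁ : ∑ j, z j = 1) :
    ∑ j, f (1 - z j) ≤ (Fintype.card ι - c) * f 1 + c * f (1 - 1 / c) := by
  calc ∑ j, f (1 - z j)
      ≤ ∑ j, ((1 - c * z j) * f 1 + c * z j * f (1 - 1 / c)) :=
        sum_le_sum fun j _ => hf.apply_one_sub_le_chord hc hs₁ hs₂ (hz₀ j) (hz j)
    _ = (Fintype.card ι - c * ∑ j, z j) * f 1 + c * (∑ j, z j) * f (1 - 1 / c) := by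
        simp only [sum_add_distrib, ← sum_mul, sum_sub_distrib, ← mul_sum, sum_const,
          card_univ, nsmul_eq_mul, mul_one]
    _ = (Fintype.card ι - c) * f 1 + c * f (1 - 1 / c) := by rw [hz₁, mul_one]

theorem stmt5_general (q d D : ℕ) (hq : d + 1 ≤ q)
    (z : Fin q → ℝ)
    (hz0 : ∀ j, 0 ≤ z j) (hzU : ∀ j, z j ≤ 1 / ((q : ℝ) - d))
    (hz1 : ∑ j, z j = 1) :
    ∑ j, (1 - z j) ^ D ≤ (d : ℝ) + ((q : ℝ) - d) * (1 - 1 / ((q : ℝ) - d)) ^ D := by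
  have hc : (1 : ℝ) ≤ q - d := by
    have : (d : ℝ) + 1 ≤ q := by exact_mod_cast hq
    linarith
  have hc₀ : (0 : ℝ) < q - d := by linarith
  have hs₂ : 1 - 1 / ((q : ℝ) - d) ∈ Ici (0 : ℝ) :=
    sub_nonneg.2 ((div_le_one hc₀).2 hc)
  have h := (convexOn_pow D).sum_apply_one_sub_le hc₀ (mem_Ici.2 zero_le_one) hs₂ hz0 hzU hz1
  rw [Fintype.card_fin, one_pow, mul_one, sub_sub_cancel] at h
  exact h

/-- If `q ≥ d+1`, `1 ≤ D ≤ d`, and `z` is a probability vector with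
`0 ≤ z_j ≤ 1/(q−d)`, then `∑_j (1 − z_j)^D ≤ d + (q−d)(1 − 1/(q−d))^D`. -/
theorem stmt5 (q d D : ℕ) (hq : d + 1 ≤ q) (hD1 : 1 ≤ D) (hDd : D ≤ d)
    (z : Fin q → ℝ)
    (hz0 : ∀ j, 0 ≤ z j) (hzU : ∀ j, z j ≤ 1 / ((q : ℝ) - d))
    (hz1 : ∑ j, z j = 1) :
    ∑ j, (1 - z j) ^ D ≤ (d : ℝ) + ((q : ℝ) - d) * (1 - 1 / ((q : ℝ) - d)) ^ D :=
  stmt5_general q d D hq z hz0 hzU hz1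
end

section
/- Let q, d, D be positive integers with q ≥ d+1 and D ≤ d, and for each i ∈ [D] let x_i = (x_{i,1},…,x_{i,q}) be a probability vector with entries in [0, 1/(q−d)]. Then ∑_{j=1}^q ∏_{i=1}^D (1 − x_{i,j}) ≤ d + (q−d)(1 − 1/(q−d))^D. -/
/-!
By AM-GM, `∏ᵢ (1 - x i j) ≤ (1 - x̄ j) ^ D` where `x̄ = 𝔼 i, x i` is again a probability vector
with entries in `[0, 1/r]`, `r = q - d`. Since `t ↦ t ^ D` is convex, each `(1 - x̄ j) ^ D` lies
below the chord through the values at `x̄ j = 0` and `x̄ j = 1/r`; summing these linear bounds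
and using `∑ⱼ x̄ j = 1` gives `q - r + r (1 - 1/r) ^ D`.
-/

open Finset
open scoped BigOperators

namespace Real

theorem prod_le_expect_pow {ι : Type*} (s : Finset ι) {f : ι → ℝ} (hf : ∀ i ∈ s, 0 ≤ f i) :
    ∏ i ∈ s, f i ≤ (𝔼 i ∈ s, f i) ^ #s := by
  rcases s.eq_empty_or_nonempty with rfl | hs
  · simp
  have hcard : (#s : ℝ) ≠ 0 := by exact_mod_cast hs.card_pos.ne'
  have amgm := geom_mean_le_arith_mean_weighted s (fun _ ↦ (#s : ℝ)⁻¹) f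
    (fun _ _ ↦ by positivity) (by simp [hcard]) hf
  rw [← mul_sum, ← div_eq_inv_mul, ← expect_eq_sum_div_card] at amgm
  calc ∏ i ∈ s, f i = (∏ i ∈ s, f i ^ (#s : ℝ)⁻¹) ^ #s := by
        rw [← prod_pow]
        exact prod_congr rfl fun i hi ↦ (rpow_inv_natCast_pow (hf i hi) hs.card_pos.ne').symm
    _ ≤ (𝔼 i ∈ s, f i) ^ #s :=
        pow_le_pow_left₀ (prod_nonneg fun i hi ↦ rpow_nonneg (hf i hi) _) amgm _

end Real

theorem one_sub_mul_pow_le {t c : ℝ} (ht0 : 0 ≤ t) (ht1 : t ≤ 1) (hc : c ≤ 1) (n : ℕ) :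
    (1 - t * c) ^ n ≤ (1 - t) + t * (1 - c) ^ n := by
  have := (convexOn_pow n).2 (Set.mem_Ici.2 zero_le_one) (Set.mem_Ici.2 (sub_nonneg.2 hc))
    (sub_nonneg.2 ht1) ht0 (sub_add_cancel 1 t)
  simp only [smul_eq_mul, one_pow, mul_one] at this
  rwa [show 1 - t + t * (1 - c) = 1 - t * c by ring] at this

theorem sum_one_sub_pow_le {ι : Type*} [Fintype ι] (n : ℕ) {r : ℝ} (hr : 1 ≤ r) {z : ι → ℝ}
    (hz0 : ∀ j, 0 ≤ z j) (hzr : ∀ j, z j ≤ r⁻¹) (hz1 : ∑ j, z j = 1) :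
    ∑ j, (1 - z j) ^ n ≤ (Fintype.card ι - r) + r * (1 - r⁻¹) ^ n := by
  have hr0 : 0 < r := zero_lt_one.trans_le hr
  have chord (j : ι) : (1 - z j) ^ n ≤ (1 - z j * r) + z j * r * (1 - r⁻¹) ^ n := by
    have := one_sub_mul_pow_le (t := z j * r) (c := r⁻¹) (mul_nonneg (hz0 j) hr0.le)
      ((le_div_iff₀ hr0).1 (by simpa using hzr j)) (inv_le_one_of_one_le₀ hr) n
    rwa [mul_inv_cancel_right₀ hr0.ne'] at this
  calc ∑ j, (1 - z j) ^ n ≤ ∑ j, ((1 - z j * r) + z j * r * (1 - r⁻¹) ^ n) :=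
        sum_le_sum fun j _ ↦ chord j
    _ = (Fintype.card ι - r) + r * (1 - r⁻¹) ^ n := by
        simp only [sum_add_distrib, sum_sub_distrib, ← sum_mul, hz1, sum_const, card_univ,
          nsmul_eq_mul, mul_one, one_mul]

theorem stmt6_general (q d D : ℕ) (hq : d + 1 ≤ q) (hD1 : 1 ≤ D)
    (x : Fin D → Fin q → ℝ)
    (hx0 : ∀ i j, 0 ≤ x i j) (hxU : ∀ i j, x i j ≤ 1 / ((q : ℝ) - d))
    (hx1 : ∀ i, ∑ j, x i j = 1) :
    ∑ j, ∏ i, (1 - x i j) ≤ (d : ℝ) + ((q : ℝ) - d) * (1 - 1 / ((q : ℝ) - d)) ^ D := by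
  have : Nonempty (Fin D) := ⟨⟨0, hD1⟩⟩
  have hr : 1 ≤ (q : ℝ) - d := by
    rw [le_sub_iff_add_le']; exact_mod_cast hq
  have hx_le_one (i j) : x i j ≤ 1 :=
    (hxU i j).trans (div_le_one_of_le₀ hr (zero_le_one.trans hr))
  have hmean1 : ∑ j, 𝔼 i, x i j = 1 := by
    rw [← expect_sum_comm]; simp [hx1]
  calc ∑ j, ∏ i, (1 - x i j) ≤ ∑ j, (1 - 𝔼 i, x i j) ^ D := by
        refine sum_le_sum fun j _ ↦ ?_
        have := Real.prod_le_expect_pow univ (f := fun i ↦ 1 - x i j)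
          fun i _ ↦ sub_nonneg.2 (hx_le_one i j)
        simpa [expect_sub_distrib] using this
    _ ≤ _ := by
        have := sum_one_sub_pow_le D hr (fun j ↦ expect_nonneg fun i _ ↦ hx0 i j)
          (fun j ↦ expect_le univ_nonempty fun i _ ↦ by simpa using hxU i j) hmean1
        simpa [one_div] using this

/-- If `q ≥ d+1`, `1 ≤ D ≤ d`, and `x_1,…,x_D` are probability vectors
with entries in `[0, 1/(q−d)]`, then `∑_j ∏_i (1 − x_{i,j}) ≤ d + (q−d)(1 − 1/(q−d))^D`. -/
theorem stmt6 (q d D : ℕ) (hq : d + 1 ≤ q) (hD1 : 1 ≤ D) (hDd : D ≤ d)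
    (x : Fin D → Fin q → ℝ)
    (hx0 : ∀ i j, 0 ≤ x i j) (hxU : ∀ i j, x i j ≤ 1 / ((q : ℝ) - d))
    (hx1 : ∀ i, ∑ j, x i j = 1) :
    ∑ j, ∏ i, (1 - x i j) ≤ (d : ℝ) + ((q : ℝ) - d) * (1 - 1 / ((q : ℝ) - d)) ^ D :=
  stmt6_general q d D hq hD1 x hx0 hxU hx1
end

section
/- Let q, d, D be positive integers with q ≥ d+1 and D ≤ d, and for each i ∈ [D] let x_i be a probability vector with entries in [0, 1/(q−d)]. Let Q ⊆ [q] be a set of colors and k ∈ Q. Then the ratio ∏_{i∈[D]}(1−x_{i,k}) / ∑_{j∈Q} ∏_{i∈[D]}(1−x_{i,j}) is at least (1 − 1/(q−d))^d / (d + (q−d)(1 − 1/(q−d))^d), provided the denominator is positive. -/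
open Finset

lemma amgm_aux (n : ℕ) (hn : 0 < n) (f : Fin n → ℝ) (hf : ∀ i, 0 ≤ f i) :
    ∏ i, f i ≤ ((∑ i, f i) / n) ^ n := by
  have hn' : (n : ℝ) ≠ 0 := Nat.cast_ne_zero.2 hn.ne'
  have h := Real.geom_mean_le_arith_mean_weighted Finset.univ (fun _ => (n : ℝ)⁻¹) f
    (fun i _ => by positivity) (by simp [Finset.sum_const, hn']) (fun i _ => hf i)
  have key : (∏ i, f i ^ ((n : ℝ)⁻¹)) ^ n = ∏ i, f i := by
    rw [← Finset.prod_pow]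
    refine Finset.prod_congr rfl fun i _ => ?_
    rw [← Real.rpow_natCast (f i ^ ((n:ℝ)⁻¹)) n, ← Real.rpow_mul (hf i),
      inv_mul_cancel₀ hn', Real.rpow_one]
  calc ∏ i, f i = (∏ i, f i ^ ((n : ℝ)⁻¹)) ^ n := key.symm
    _ ≤ ((∑ i, (n:ℝ)⁻¹ * f i)) ^ n := by
        refine pow_le_pow_left₀ (Finset.prod_nonneg fun i _ => Real.rpow_nonneg (hf i) _) h n
    _ = ((∑ i, f i) / n) ^ n := by rw [← Finset.mul_sum]; ring_nf

/-- If `q ≥ d+1`, `1 ≤ D ≤ d`, `x_1,…,x_D` are probability vectors with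
entries in `[0, 1/(q−d)]`, `Q ⊆ [q]`, `k ∈ Q`, and `∑_{j∈Q} ∏_i (1−x_{i,j}) > 0`, then
`∏_i (1−x_{i,k}) / ∑_{j∈Q} ∏_i (1−x_{i,j}) ≥ (1−1/(q−d))^d / (d+(q−d)(1−1/(q−d))^d)`. -/
theorem stmt7 (q d D : ℕ) (hq : d + 1 ≤ q) (hD1 : 1 ≤ D) (hDd : D ≤ d)
    (x : Fin D → Fin q → ℝ)
    (hx0 : ∀ i j, 0 ≤ x i j) (hxU : ∀ i j, x i j ≤ 1 / ((q : ℝ) - d))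
    (hx1 : ∀ i, ∑ j, x i j = 1)
    (Q : Finset (Fin q)) (k : Fin q) (hk : k ∈ Q)
    (hden : 0 < ∑ j ∈ Q, ∏ i, (1 - x i j)) :
    (1 - 1 / ((q : ℝ) - d)) ^ d / ((d : ℝ) + ((q : ℝ) - d) * (1 - 1 / ((q : ℝ) - d)) ^ d)
      ≤ (∏ i, (1 - x i k)) / (∑ j ∈ Q, ∏ i, (1 - x i j)) := by
  have hr1 : (1 : ℝ) ≤ (q : ℝ) - d := by
    have : (d : ℝ) + 1 ≤ q := by exact_mod_cast hq
    linarith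
  set r : ℝ := (q : ℝ) - d with hr
  set c : ℝ := 1 / r with hc
  have hc0 : 0 < c := by positivity
  have hc1 : c ≤ 1 := by rw [hc]; rw [div_le_one (by linarith)]; linarith
  set a : ℝ := 1 - c with ha
  have ha0 : 0 ≤ a := by linarith
  have ha1 : a ≤ 1 := by linarith
  have hd1 : (1 : ℝ) ≤ d := by exact_mod_cast hDd.trans' hD1
  have hD0 : (0 : ℝ) < D := by exact_mod_cast hD1
  -- numerator lower bound
  have hnum : a ^ D ≤ ∏ i, (1 - x i k) := by
    calc a ^ D = ∏ _i : Fin D, a := by simp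
    _ ≤ ∏ i, (1 - x i k) := by
        refine Finset.prod_le_prod (fun i _ => ha0) (fun i _ => ?_)
        have := hxU i k; simp only [ha, hc]; linarith
  -- denominator upper bound
  set B : ℝ := (d : ℝ) + r * a ^ D with hB
  have hterm : ∀ j : Fin q, ∏ i, (1 - x i j) ≤ 1 - (1 - a ^ D) * ((∑ i, x i j) / (D * c)) := by
    intro j
    set s : ℝ := ∑ i, x i j with hs
    have hs0 : 0 ≤ s := Finset.sum_nonneg fun i _ => hx0 i j
    have hsU : s ≤ D * c := by
      calc s ≤ ∑ _i : Fin D, c := Finset.sum_le_sum (fun i _ => hxU i j)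
      _ = D * c := by simp [mul_comm]
    set t : ℝ := s / (↑D * c) with ht
    have ht0 : 0 ≤ t := by positivity
    have ht1 : t ≤ 1 := by rw [ht, div_le_one (by positivity)]; exact hsU
    have h1 : ∏ i, (1 - x i j) ≤ (1 - s / D) ^ D := by
      have := amgm_aux D hD1 (fun i => 1 - x i j) (fun i => by
        have := hxU i j; have := hc1; simp only [hc] at *; linarith)
      convert this using 2
      rw [Finset.sum_sub_distrib]
      simp [← hs]
      field_simp
    have htc : t * c = s / D := by
      rw [ht, div_mul_eq_mul_div, div_eq_div_iff (by positivity) (by positivity)]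
      ring
    have heq : 1 - s / ↑D = (1 - t) * 1 + t * a := by
      have hra : (1 - t) * 1 + t * a = 1 - t * c := by rw [ha]; ring
      rw [hra, htc]
    have hcv := (convexOn_pow D).2 (Set.mem_Ici.2 (zero_le_one (α := ℝ)))
      (Set.mem_Ici.2 ha0) (by linarith : (0:ℝ) ≤ 1 - t) ht0 (by ring)
    rw [smul_eq_mul, smul_eq_mul, smul_eq_mul, smul_eq_mul] at hcv
    calc ∏ i, (1 - x i j) ≤ (1 - s / D) ^ D := h1
    _ = ((1 - t) * 1 + t * a) ^ D := by rw [heq]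
    _ ≤ (1 - t) * 1 ^ D + t * a ^ D := hcv
    _ = 1 - (1 - a ^ D) * t := by ring
  have hdenB : (∑ j ∈ Q, ∏ i, (1 - x i j)) ≤ B := by
    have hsub : (∑ j ∈ Q, ∏ i, (1 - x i j)) ≤ ∑ j, ∏ i, (1 - x i j) := by
      refine Finset.sum_le_sum_of_subset_of_nonneg (Finset.subset_univ Q) (fun j _ _ => ?_)
      refine Finset.prod_nonneg fun i _ => ?_
      have := hxU i j; simp only [hc] at this; linarith
    have hsumt : ∑ j, ((∑ i, x i j) : ℝ) = D := by
      rw [Finset.sum_comm]; simp [hx1]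
    have h3 : ∑ j, ∏ i, (1 - x i j) ≤ ∑ j : Fin q, (1 - (1 - a ^ D) * ((∑ i, x i j) / (D * c))) :=
      Finset.sum_le_sum (fun j _ => hterm j)
    have hDne : (D : ℝ) ≠ 0 := hD0.ne'
    have hcne : c ≠ 0 := hc0.ne'
    have hrne : r ≠ 0 := by intro h; rw [h] at hr1; linarith
    have hkey : ∀ j : Fin q, 1 - (1 - a ^ D) * ((∑ i, x i j) / (D * c))
        = 1 - (1 - a ^ D) / (D * c) * (∑ i, x i j) := fun j => by ring
    have h4 : ∑ j : Fin q, (1 - (1 - a ^ D) * ((∑ i, x i j) / (D * c))) = B := by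
      simp_rw [hkey]
      rw [Finset.sum_sub_distrib, ← Finset.mul_sum, hsumt]
      simp only [Finset.sum_const, Finset.card_univ, Fintype.card_fin, nsmul_eq_mul, mul_one]
      have hmul : (1 - a ^ D) / (D * c) * D = (1 - a ^ D) * r := by
        rw [hc]; field_simp
      rw [hmul, hB, hr]
      ring
    linarith [hsub, h3, h4.le]
  -- final chain
  have hB0 : 0 < B := by
    have : (0:ℝ) ≤ r * a ^ D := by positivity
    rw [hB]; linarith
  have hBd0 : (0:ℝ) < (d : ℝ) + r * a ^ d := by
    have : (0:ℝ) ≤ r * a ^ d := by positivity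
    linarith
  have hpow : a ^ d ≤ a ^ D := pow_le_pow_of_le_one ha0 ha1 hDd
  have step1 : a ^ d / ((d:ℝ) + r * a ^ d) ≤ a ^ D / B := by
    rw [div_le_div_iff₀ hBd0 hB0, hB]
    nlinarith [hpow, pow_nonneg ha0 d, pow_nonneg ha0 D]
  have step2 : a ^ D / B ≤ (∏ i, (1 - x i k)) / (∑ j ∈ Q, ∏ i, (1 - x i j)) := by
    calc a ^ D / B ≤ a ^ D / (∑ j ∈ Q, ∏ i, (1 - x i j)) := by
          apply div_le_div_of_nonneg_left (pow_nonneg ha0 D) hden hdenB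
    _ ≤ (∏ i, (1 - x i k)) / (∑ j ∈ Q, ∏ i, (1 - x i j)) := by
          gcongr
  exact le_trans step1 step2
end

section
/- Let q be a positive integer and π a q-dimensional probability vector. Then the spectral norm of diag(π) − π πᵀ is at most max_{j∈[q]} π_j. -/
/-!
The quadratic form of `diag(π) - π πᵀ` at `x` is the variance `∑ πᵢ xᵢ² - (∑ πᵢ xᵢ)²` of `x`
under `π`. It is nonnegative by Cauchy–Schwarz and at most `∑ πᵢ xᵢ² ≤ (maxᵢ πᵢ) ‖x‖²`.
Since the matrix is symmetric, its spectral norm is the supremum of the absolute value of its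
Rayleigh quotient, hence at most `maxᵢ πᵢ`.
-/

open Matrix

theorem ContinuousLinearMap.norm_le_of_abs_re_inner_self_le {𝕜 E : Type*} [RCLike 𝕜]
    [NormedAddCommGroup E] [InnerProductSpace 𝕜 E] {T : E →L[𝕜] E}
    (hT : (T : E →ₗ[𝕜] E).IsSymmetric) {c : ℝ} (hc : 0 ≤ c)
    (h : ∀ x, |RCLike.re (inner 𝕜 (T x) x)| ≤ c * ‖x‖ ^ 2) : ‖T‖ ≤ c := by
  rw [T.norm_eq_iSup_rayleighQuotient hT]
  refine ciSup_le fun x => ?_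
  rcases eq_or_ne x 0 with rfl | hx
  · simpa using hc
  rw [rayleighQuotient, reApplyInnerSelf_apply, abs_div, abs_sq,
    div_le_iff₀ (by positivity)]
  exact h x

theorem Matrix.norm_toEuclideanCLM_le_of_abs_dotProduct_mulVec_le {n : Type*} [Fintype n]
    [DecidableEq n] {A : Matrix n n ℝ} (hA : A.IsHermitian) {c : ℝ} (hc : 0 ≤ c)
    (h : ∀ x : n → ℝ, |x ⬝ᵥ A *ᵥ x| ≤ c * (x ⬝ᵥ x)) :
    ‖toEuclideanCLM (𝕜 := ℝ) A‖ ≤ c := by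
  refine ContinuousLinearMap.norm_le_of_abs_re_inner_self_le
    (isSymmetric_toEuclideanLin_iff.mpr hA) hc fun x => ?_
  rw [RCLike.re_to_real, real_inner_comm, inner_toEuclideanCLM, ← real_inner_self_eq_norm_sq,
    EuclideanSpace.inner_eq_star_dotProduct]
  simpa [dotProduct_comm] using h x

theorem Finset.sq_sum_mul_le_sum_mul_sq {ι : Type*} (s : Finset ι) {w : ι → ℝ}
    (hw0 : ∀ i ∈ s, 0 ≤ w i) (hw1 : ∑ i ∈ s, w i ≤ 1) (x : ι → ℝ) :
    (∑ i ∈ s, w i * x i) ^ 2 ≤ ∑ i ∈ s, w i * x i ^ 2 := by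
  have hwx : 0 ≤ ∑ i ∈ s, w i * x i ^ 2 :=
    sum_nonneg fun i hi => mul_nonneg (hw0 i hi) (sq_nonneg _)
  calc (∑ i ∈ s, w i * x i) ^ 2
      ≤ (∑ i ∈ s, w i) * ∑ i ∈ s, w i * x i ^ 2 :=
        sum_sq_le_sum_mul_sum_of_sq_le_mul s hw0
          (fun i hi => mul_nonneg (hw0 i hi) (sq_nonneg _)) fun i _ => le_of_eq (by ring)
    _ ≤ ∑ i ∈ s, w i * x i ^ 2 := mul_le_of_le_one_left hwx hw1

theorem Matrix.dotProduct_diagonal_sub_vecMulVec_mulVec {n : Type*} [Fintype n]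
    [DecidableEq n] (w x : n → ℝ) :
    x ⬝ᵥ (diagonal w - vecMulVec w w) *ᵥ x = ∑ i, w i * x i ^ 2 - (∑ i, w i * x i) ^ 2 := by
  rw [sub_mulVec, dotProduct_sub, vecMulVec_mulVec, sq, Finset.sum_mul]
  congr 1 <;>
    simp only [dotProduct, mulVec_diagonal, MulOpposite.smul_eq_mul_unop, Pi.smul_apply,
      MulOpposite.unop_op] <;>
    exact Finset.sum_congr rfl fun i _ => by ring

theorem Matrix.norm_toEuclideanCLM_diagonal_sub_vecMulVec_le {n : Type*} [Fintype n]
    [DecidableEq n] {w : n → ℝ} (hw0 : ∀ i, 0 ≤ w i) (hw1 : ∑ i, w i ≤ 1) {c : ℝ} (hc : 0 ≤ c)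
    (hwc : ∀ i, w i ≤ c) : ‖toEuclideanCLM (𝕜 := ℝ) (diagonal w - vecMulVec w w)‖ ≤ c := by
  have hA : (diagonal w - vecMulVec w w).IsHermitian :=
    (isHermitian_diagonal w).sub (posSemidef_vecMulVec_self_star w).isHermitian
  refine norm_toEuclideanCLM_le_of_abs_dotProduct_mulVec_le hA hc fun x => ?_
  have hvar := Finset.univ.sq_sum_mul_le_sum_mul_sq (fun i _ => hw0 i) hw1 x
  have hmax : ∑ i, w i * x i ^ 2 ≤ c * (x ⬝ᵥ x) := by
    rw [dotProduct, Finset.mul_sum]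
    exact Finset.sum_le_sum fun i _ => by nlinarith [hwc i, sq_nonneg (x i)]
  rw [dotProduct_diagonal_sub_vecMulVec_mulVec, abs_of_nonneg (sub_nonneg.mpr hvar)]
  linarith [sq_nonneg (∑ i, w i * x i)]

/-- For a probability vector `π`, the spectral norm of
`diag(π) − π πᵀ` is at most `max_j π_j`. -/
theorem stmt19 (q : ℕ) (hq : 0 < q) (π : Fin q → ℝ)
    (hπ0 : ∀ j, 0 ≤ π j) (hπ1 : ∑ j, π j = 1) :
    ‖Matrix.toEuclideanCLM (𝕜 := ℝ)
        (Matrix.diagonal π - Matrix.of (fun i j => π i * π j))‖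
      ≤ Finset.univ.sup' ⟨⟨0, hq⟩, Finset.mem_univ _⟩ π := by
  have hle : ∀ j, π j ≤ Finset.univ.sup' ⟨⟨0, hq⟩, Finset.mem_univ _⟩ π :=
    fun j => Finset.le_sup' π (Finset.mem_univ j)
  exact norm_toEuclideanCLM_diagonal_sub_vecMulVec_le hπ0 hπ1.le
    ((hπ0 _).trans (hle ⟨0, hq⟩)) hle
end
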